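/- Let n ≥ 1, let l₁, …, lₙ ≥ 1 be integers with L = ∑_j l_j, and let m₁, …, mₙ ∈ ℤ with ∑_j m_j < (n+1)·L − n. Then for every T ∈ ℂ, the torus integral ∯_{|z_j|=R} (∏_{j=1}^{n} z_j^{m_j}) / (∏_{j=1}^{n} (z_j·∏_{k=1}^{n} z_k − T)^{l_j}) dz tends to 0 as R → ∞ (the integrand being defined on the torus of radius R as soon as R^{n+1} > |T|). In the paper's notation, Res_∞(g_m) = 0 under the stated degree condition. -/

import Mathlib

/-!
On the torus `|z_j| = R` the numerator has modulus `R ^ ∑ m_j`, while each factor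
`z_j ∏ z_k - T` has modulus at least `R ^ (n+1) - |T| ≥ R ^ (n+1) / 2` once `R` is large.
So the integrand is `O(R ^ (∑ m_j - (n+1) L))`, and the standard estimate of a torus integral by
its volume `(2π R) ^ n` times the sup of the integrand gives `O(R ^ (n + ∑ m_j - (n+1) L))`,
which tends to `0` exactly under the degree condition.
-/

open Complex MeasureTheory Filter

theorem Finset.prod_zpow_eq_zpow_sum {ι G₀ : Type*} [CommGroupWithZero G₀] {a : G₀} (ha : a ≠ 0)
    (s : Finset ι) (m : ι → ℤ) : ∏ j ∈ s, a ^ m j = a ^ ∑ j ∈ s, m j := by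
  classical
  induction s using Finset.induction with
  | empty => simp
  | insert j s hj ih => rw [prod_insert hj, sum_insert hj, zpow_add₀ ha, ih]

theorem norm_torusMap_zero_apply {n : ℕ} (R θ : Fin n → ℝ) (i : Fin n) :
    ‖torusMap 0 R θ i‖ = |R i| := by
  simp [torusMap]

theorem tendsto_torusIntegral_atTop_zero {n : ℕ} {E : Type*} [NormedAddCommGroup E]
    [NormedSpace ℂ E] (f : (Fin n → ℂ) → E) (c : Fin n → ℂ) (g : ℝ → ℝ)
    (hg : Tendsto (fun R => R ^ n * g R) atTop (nhds 0))
    (hf : ∀ᶠ R in atTop, ∀ θ, ‖f (torusMap c (fun _ => R) θ)‖ ≤ g R) :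
    Tendsto (fun R : ℝ => ∯ z in T(c, fun _ => R), f z) atTop (nhds 0) := by
  rw [tendsto_zero_iff_norm_tendsto_zero]
  refine squeeze_zero' (.of_forall fun _ => norm_nonneg _) ?_ (by simpa using hg.const_mul ((2 * Real.pi) ^ n))
  filter_upwards [hf, eventually_ge_atTop 0] with R hfR hR
  calc _ ≤ ((2 * Real.pi) ^ n * ∏ _i : Fin n, |R|) * g R :=
        norm_torusIntegral_le_of_norm_le_const hfR
    _ = (2 * Real.pi) ^ n * (R ^ n * g R) := by simp [abs_of_nonneg hR, mul_assoc]

section Integrand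

variable {ι : Type*} [Fintype ι] {z : ι → ℂ} {R : ℝ}

theorem norm_prod_zpow_of_norm_eq (hR : R ≠ 0) (hz : ∀ i, ‖z i‖ = R) (m : ι → ℤ) :
    ‖∏ j, z j ^ m j‖ = R ^ ∑ j, m j := by
  simp only [norm_prod, norm_zpow, hz, Finset.prod_zpow_eq_zpow_sum hR]

theorem le_norm_mul_prod_sub_of_norm_eq (hz : ∀ i, ‖z i‖ = R) (j : ι) (T : ℂ) :
    R ^ (Fintype.card ι + 1) - ‖T‖ ≤ ‖z j * ∏ k, z k - T‖ := by
  have hnorm : ‖z j * ∏ k, z k‖ = R ^ (Fintype.card ι + 1) := by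
    simp only [norm_mul, norm_prod, hz, Finset.prod_const, Finset.card_univ, pow_succ']
  have := norm_sub_norm_le (z j * ∏ k, z k) T
  rw [hnorm] at this
  linarith

theorem norm_div_prod_mul_prod_sub_pow_le (hR : 0 < R) (hz : ∀ i, ‖z i‖ = R) {T : ℂ}
    (hT : 2 * ‖T‖ ≤ R ^ (Fintype.card ι + 1)) (l : ι → ℕ) (m : ι → ℤ) :
    ‖(∏ j, z j ^ m j) / ∏ j, (z j * ∏ k, z k - T) ^ l j‖
      ≤ 2 ^ (∑ j, l j) * R ^ (∑ j, m j - (Fintype.card ι + 1) * ∑ j, (l j : ℤ)) := by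
  set a : ℝ := R ^ (Fintype.card ι + 1) / 2
  have ha : 0 < a := by positivity
  have hden : a ^ ∑ j, l j ≤ ‖∏ j, (z j * ∏ k, z k - T) ^ l j‖ := by
    rw [norm_prod, ← Finset.prod_pow_eq_pow_sum]
    refine Finset.prod_le_prod (fun _ _ => by positivity) fun j _ => ?_
    rw [norm_pow]
    have := le_norm_mul_prod_sub_of_norm_eq hz j T
    exact pow_le_pow_left₀ ha.le (by simp only [a]; linarith) _
  have hexp : R ^ (∑ j, m j) / a ^ ∑ j, l j
      = 2 ^ (∑ j, l j) * R ^ (∑ j, m j - (Fintype.card ι + 1) * ∑ j, (l j : ℤ)) := by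
    rw [zpow_sub₀ hR.ne', div_pow, ← pow_mul, ← Nat.cast_sum, ← Nat.cast_succ,
      ← Nat.cast_mul, zpow_natCast]
    field_simp
  rw [norm_div, norm_prod_zpow_of_norm_eq hR.ne' hz, ← hexp]
  gcongr

end Integrand

theorem torus_integral_tendsto_zero_general (n : ℕ)
    (l : Fin n → ℕ) (m : Fin n → ℤ)
    (hm : (∑ j, m j) < ((n : ℤ) + 1) * (∑ j, (l j : ℤ)) - n) (T : ℂ) :
    Tendsto (fun R : ℝ =>
        ∯ z in T((0 : Fin n → ℂ), fun _ => R),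
          (∏ j, z j ^ (m j)) /
            (∏ j, (z j * (∏ k, z k) - T) ^ (l j)))
      atTop (nhds 0) := by
  set e : ℤ := ∑ j, m j - (n + 1) * ∑ j, (l j : ℤ)
  have hdecay : Tendsto (fun R : ℝ => R ^ n * (2 ^ (∑ j, l j) * R ^ e)) atTop (nhds 0) := by
    have hne : (n : ℤ) + e < 0 := by omega
    refine ((tendsto_zpow_atTop_zero hne).const_mul (2 ^ (∑ j, l j))).congr' ?_ |>.trans (by simp)
    filter_upwards [eventually_gt_atTop 0] with R hR
    rw [zpow_add₀ hR.ne', zpow_natCast]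
    ring
  refine tendsto_torusIntegral_atTop_zero _ _ _ hdecay ?_
  filter_upwards [eventually_ge_atTop 1, eventually_ge_atTop (2 * ‖T‖)] with R hR1 hRT θ
  have hR : 0 < R := by linarith
  have hz : ∀ i, ‖torusMap 0 (fun _ => R) θ i‖ = R := fun i => by
    rw [norm_torusMap_zero_apply, abs_of_pos hR]
  have hT : 2 * ‖T‖ ≤ R ^ (Fintype.card (Fin n) + 1) := hRT.trans (le_self_pow₀ hR1 (by simp))
  simpa using norm_div_prod_mul_prod_sub_pow_le hR hz hT l m

/-- (Lemma `lm:residue3` of the paper.) If `∑ m_j < (n+1)·∑ l_j − n`,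
then for every `T ∈ ℂ` the torus integral
`∯_{|z_j|=R} ∏ z_j^{m_j} / ∏ (z_j ∏ z_k − T)^{l_j} dz` tends to `0` as `R → ∞`;
i.e. `Res_∞(g_m) = 0` under the stated degree condition. -/
theorem torus_integral_tendsto_zero (n : ℕ) (hn : 1 ≤ n)
    (l : Fin n → ℕ) (hl : ∀ j, 1 ≤ l j) (m : Fin n → ℤ)
    (hm : (∑ j, m j) < ((n : ℤ) + 1) * (∑ j, (l j : ℤ)) - n) (T : ℂ) :
    Tendsto (fun R : ℝ =>
        ∯ z in T((0 : Fin n → ℂ), fun _ => R),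
          (∏ j, z j ^ (m j)) /
            (∏ j, (z j * (∏ k, z k) - T) ^ (l j)))
      atTop (nhds 0) :=
  torus_integral_tendsto_zero_general n l m hm T
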